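/- Let X = Y = Z = {0,1}, f(x,y) = x ∧ y, P_{XY} uniform on {0,1}². Suppose P_{ŨX̃Ỹ} is a joint distribution on U × X × Y with full-support marginal P_{X̃Ỹ} (all four values positive) satisfying the Markov chain Ũ −∘− X̃ −∘− Ỹ, and let Z̃ = f(X̃, Ỹ). If I(Ũ ∧ Ỹ | X̃) = 0 and H(Z̃ | Ũ, Ỹ) = 0, then H(X̃ | Ũ) = 0. -/

import Mathlib

/-! On the support, `H(X ∧ Y | U, Y) = 0` says that `(u, y)` determines `x ∧ y`, which for `y = 1`
is `x` itself. `I(U ∧ Y | X) = 0` is the equality case of Gibbs' inequality for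
`P_{UXY}` against `P_{UX} P_{XY} / P_X`, so these coincide; with full support this gives
`p(u, x, 1) > 0` whenever `p(u, x, y) > 0`. Hence two points of the support with the same `u` can
both be moved to `y = 1` without leaving the support, and there `u` determines `x`. -/

open Real Finset
open scoped Classical

noncomputable section

/-- Shannon entropy (base 2) of a pmf on a finite type. -/
def ent {S : Type*} [Fintype S] (p : S → ℝ) : ℝ :=
  - ∑ s, p s * Real.logb 2 (p s)

/-- Pushforward pmf under a map. -/
def push {S T : Type*} [Fintype S] [Fintype T] (p : S → ℝ) (f : S → T) : T → ℝ :=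
  fun t => ∑ s, if f s = t then p s else 0

/-- Entropy of the random variable `f` under joint pmf `p`. -/
def entOf {S T : Type*} [Fintype S] [Fintype T] (p : S → ℝ) (f : S → T) : ℝ :=
  ent (push p f)

/-- Conditional entropy `H(f | g)` under joint pmf `p`. -/
def condEnt {S T V : Type*} [Fintype S] [Fintype T] [Fintype V]
    (p : S → ℝ) (f : S → T) (g : S → V) : ℝ :=
  entOf p (fun s => (f s, g s)) - entOf p g

/-- Mutual information `I(f ∧ g)` under joint pmf `p`. -/
def miOf {S T V : Type*} [Fintype S] [Fintype T] [Fintype V]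
    (p : S → ℝ) (f : S → T) (g : S → V) : ℝ :=
  entOf p f + entOf p g - entOf p (fun s => (f s, g s))

/-- Conditional mutual information `I(f ∧ g | h)` under joint pmf `p`. -/
def cmiOf {S T V W : Type*} [Fintype S] [Fintype T] [Fintype V] [Fintype W]
    (p : S → ℝ) (f : S → T) (g : S → V) (h : S → W) : ℝ :=
  condEnt p f h + condEnt p g h - condEnt p (fun s => (f s, g s)) h

/-- Kullback–Leibler divergence (base 2). -/
def kl {S : Type*} [Fintype S] (p q : S → ℝ) : ℝ :=
  ∑ s, p s * Real.logb 2 (p s / q s)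

end

section Pushforward

variable {S T V : Type*} [Fintype S] [Fintype T] [Fintype V] {p : S → ℝ}

lemma push_nonneg (hp : ∀ s, 0 ≤ p s) (f : S → T) (t : T) : 0 ≤ push p f t :=
  Finset.sum_nonneg fun s _ => by split_ifs <;> simp [hp s]

lemma push_le_push_of_comp_eq (hp : ∀ s, 0 ≤ p s) {f : S → T} {g : S → V} (k : T → V)
    (hk : ∀ s, k (f s) = g s) (t : T) : push p f t ≤ push p g (k t) :=
  Finset.sum_le_sum fun s _ => by
    by_cases h : f s = t
    · simp [h, ← hk s]
    · simp only [h, if_false]; split_ifs <;> simp [hp s]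

lemma push_apply_of_injective {f : S → T} (hf : Function.Injective f) (s : S) :
    push p f (f s) = p s := by
  simp [push, hf.eq_iff]

lemma le_push (hp : ∀ s, 0 ≤ p s) (f : S → T) (s : S) : p s ≤ push p f (f s) := by
  calc p s = push p id (id s) := (push_apply_of_injective Function.injective_id s).symm
    _ ≤ push p f (f s) := push_le_push_of_comp_eq hp f (fun _ => rfl) s

lemma sum_mul_comp_eq_sum_push (f : S → T) (φ : T → ℝ) :
    ∑ s, p s * φ (f s) = ∑ t, push p f t * φ t := by
  simp only [push, Finset.sum_mul, ite_mul, zero_mul]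
  rw [Finset.sum_comm]
  simp

lemma sum_push (f : S → T) : ∑ t, push p f t = ∑ s, p s := by
  simpa using (sum_mul_comp_eq_sum_push (p := p) f fun _ => 1).symm

lemma sum_push_pair_fst (f : S → T) (g : S → V) (v : V) :
    ∑ t, push p (fun s => (f s, g s)) (t, v) = push p g v := by
  simp only [push, Prod.mk.injEq, ite_and]
  rw [Finset.sum_comm]
  simp

end Pushforward

section Entropy

variable {S T V : Type*} [Fintype S] [Fintype T] [Fintype V] {p : S → ℝ}

lemma entOf_eq_sum (f : S → T) :
    entOf p f = -∑ s, p s * Real.logb 2 (push p f (f s)) := by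
  rw [entOf, ent, sum_mul_comp_eq_sum_push f fun t => Real.logb 2 (push p f t)]

lemma condEnt_eq_sum (f : S → T) (g : S → V) :
    condEnt p f g = ∑ s, p s *
      (Real.logb 2 (push p g (g s)) - Real.logb 2 (push p (fun s => (f s, g s)) (f s, g s))) := by
  simp only [condEnt, entOf_eq_sum, mul_sub, Finset.sum_sub_distrib]
  ring

def DeterminedOnSupport (p : S → ℝ) (f : S → T) (g : S → V) : Prop :=
  ∀ s s', 0 < p s → 0 < p s' → g s = g s' → f s = f s'

lemma condEnt_eq_zero_iff (hp : ∀ s, 0 ≤ p s) (f : S → T) (g : S → V) :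
    condEnt p f g = 0 ↔
      ∀ s, 0 < p s → push p (fun s => (f s, g s)) (f s, g s) = push p g (g s) := by
  have hpair_pos : ∀ s, 0 < p s → 0 < push p (fun s => (f s, g s)) (f s, g s) :=
    fun s hs => hs.trans_le (le_push hp _ s)
  have hpair_le : ∀ s, push p (fun s => (f s, g s)) (f s, g s) ≤ push p g (g s) :=
    fun s => push_le_push_of_comp_eq hp Prod.snd (fun _ => rfl) _
  have hterm : ∀ s, 0 ≤ p s *
      (Real.logb 2 (push p g (g s)) - Real.logb 2 (push p (fun s => (f s, g s)) (f s, g s))) := by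
    intro s
    rcases (hp s).eq_or_lt with h | h
    · simp [← h]
    · exact mul_nonneg h.le (sub_nonneg.2 (Real.logb_le_logb_of_le one_lt_two
        (hpair_pos s h) (hpair_le s)))
  rw [condEnt_eq_sum, Finset.sum_eq_zero_iff_of_nonneg fun s _ => hterm s]
  refine forall_congr' fun s => ?_
  simp only [Finset.mem_univ, true_imp_iff, mul_eq_zero, sub_eq_zero]
  constructor
  · rintro (h | h) hs
    · exact absurd h hs.ne'
    · exact (Real.logb_injOn_pos one_lt_two (hpair_pos s hs)
        ((hpair_pos s hs).trans_le (hpair_le s)) h.symm)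
  · intro h
    rcases (hp s).eq_or_lt with h0 | h0
    · exact Or.inl h0.symm
    · exact Or.inr (congrArg _ (h h0)).symm

lemma determinedOnSupport_iff (hp : ∀ s, 0 ≤ p s) (f : S → T) (g : S → V) :
    DeterminedOnSupport p f g ↔
      ∀ s, 0 < p s → push p (fun s => (f s, g s)) (f s, g s) = push p g (g s) := by
  constructor
  · intro hdet s hs
    refine Finset.sum_congr rfl fun t _ => ?_
    rcases (hp t).eq_or_lt with h0 | h0
    · simp [← h0]
    · by_cases hg : g t = g s
      · simp [hg, hdet t s h0 hs hg]
      · simp [hg]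
  · intro h s s' hs hs' hg
    by_contra hf
    have htwo : push p (fun s => (f s, g s)) (f s, g s)
        + push p (fun s => (f s, g s)) (f s', g s) ≤ push p g (g s) := by
      rw [← sum_push_pair_fst f g, ← Finset.sum_pair (f := fun t => push p _ (t, g s)) hf]
      exact Finset.sum_le_sum_of_subset_of_nonneg (Finset.subset_univ _)
        fun t _ _ => push_nonneg hp _ _
    have hpos : 0 < push p (fun s => (f s, g s)) (f s', g s) :=
      hg ▸ hs'.trans_le (le_push hp _ s')
    linarith [h s hs]

lemma condEnt_eq_zero_iff_determinedOnSupport (hp : ∀ s, 0 ≤ p s) (f : S → T) (g : S → V) :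
    condEnt p f g = 0 ↔ DeterminedOnSupport p f g := by
  rw [condEnt_eq_zero_iff hp, determinedOnSupport_iff hp]

end Entropy

section Gibbs

open InformationTheory

lemma mul_log_div_add_sub_eq_mul_klFun (a : ℝ) {b : ℝ} (hb : 0 < b) :
    a * Real.log (a / b) + b - a = b * klFun (a / b) := by
  rw [klFun_apply]
  field_simp

lemma eq_of_kl_eq_zero {ι : Type*} [Fintype ι] {a b : ι → ℝ} (ha : ∀ i, 0 ≤ a i)
    (hb : ∀ i, 0 ≤ b i) (hab : ∀ i, 0 < a i → 0 < b i) (hsum : ∑ i, b i ≤ ∑ i, a i)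
    (h : kl a b = 0) : a = b := by
  set e : ι → ℝ := fun i => a i * Real.log (a i / b i) + b i - a i
  have he : ∀ i, 0 ≤ e i ∧ (e i = 0 → a i = b i) := by
    intro i
    rcases (hb i).eq_or_lt with h0 | h0
    · have hai : a i = 0 := by
        by_contra hne
        exact (hab i ((ha i).lt_of_ne' hne)).ne' h0.symm
      simp [e, hai, ← h0]
    · have hq : 0 ≤ a i / b i := div_nonneg (ha i) h0.le
      simp only [e, mul_log_div_add_sub_eq_mul_klFun _ h0, mul_eq_zero, h0.ne', false_or,
        klFun_eq_zero_iff hq, div_eq_one_iff_eq h0.ne']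
      exact ⟨mul_nonneg h0.le (klFun_nonneg hq), id⟩
  have hsum_e : ∑ i, e i = kl a b * Real.log 2 + (∑ i, b i - ∑ i, a i) := by
    simp only [e, kl, Real.logb, Finset.sum_mul, Finset.sum_sub_distrib, Finset.sum_add_distrib]
    field_simp
    ring
  have hzero : ∀ i ∈ Finset.univ, e i = 0 := by
    refine (Finset.sum_eq_zero_iff_of_nonneg fun i _ => (he i).1).1 (le_antisymm ?_ ?_)
    · rw [hsum_e, h]
      linarith
    · exact Finset.sum_nonneg fun i _ => (he i).1
  exact funext fun i => (he i).2 (hzero i (Finset.mem_univ i))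

end Gibbs

section ConditionalIndependence

variable {S T V W : Type*} [Fintype S] [Fintype T] [Fintype V] [Fintype W] {p : S → ℝ}

/-- `P_{FH} P_{GH} / P_H`: the law of `((f, g), h)` with the same pair marginals `(f, h)`, `(g, h)`
under which `f` and `g` are conditionally independent given `h`. -/
noncomputable def condIndepPush (p : S → ℝ) (f : S → T) (g : S → V) (h : S → W) : (T × V) × W → ℝ :=
  fun t => push p (fun s => (f s, h s)) (t.1.1, t.2) * push p (fun s => (g s, h s)) (t.1.2, t.2)
    / push p h t.2

lemma marginals_pos_of_push_pos (hp : ∀ s, 0 ≤ p s) (f : S → T) (g : S → V) (h : S → W)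
    {t : (T × V) × W} (ht : 0 < push p (fun s => ((f s, g s), h s)) t) :
    0 < push p (fun s => (f s, h s)) (t.1.1, t.2) ∧ 0 < push p (fun s => (g s, h s)) (t.1.2, t.2)
      ∧ 0 < push p h t.2 :=
  ⟨ht.trans_le (push_le_push_of_comp_eq hp (fun t => (t.1.1, t.2)) (fun _ => rfl) t),
    ht.trans_le (push_le_push_of_comp_eq hp (fun t => (t.1.2, t.2)) (fun _ => rfl) t),
    ht.trans_le (push_le_push_of_comp_eq hp Prod.snd (fun _ => rfl) t)⟩

lemma cmiOf_eq_kl (hp : ∀ s, 0 ≤ p s) (f : S → T) (g : S → V) (h : S → W) :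
    cmiOf p f g h = kl (push p fun s => ((f s, g s), h s)) (condIndepPush p f g h) := by
  set k : S → (T × V) × W := fun s => ((f s, g s), h s)
  have hsum : cmiOf p f g h = ∑ t, push p k t * (Real.logb 2 (push p k t)
      + Real.logb 2 (push p h t.2) - Real.logb 2 (push p (fun s => (f s, h s)) (t.1.1, t.2))
      - Real.logb 2 (push p (fun s => (g s, h s)) (t.1.2, t.2))) := by
    rw [← sum_mul_comp_eq_sum_push k]
    simp only [cmiOf, condEnt_eq_sum, ← Finset.sum_add_distrib, ← Finset.sum_sub_distrib]
    exact Finset.sum_congr rfl fun s _ => by ring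
  rw [hsum, kl]
  refine Finset.sum_congr rfl fun t _ => ?_
  rcases (push_nonneg hp k t).eq_or_lt with h0 | h0
  · simp [← h0]
  obtain ⟨hfh, hgh, hh⟩ := marginals_pos_of_push_pos hp f g h h0
  rw [condIndepPush, Real.logb_div h0.ne' (by positivity), Real.logb_div (by positivity) hh.ne',
    Real.logb_mul hfh.ne' hgh.ne']
  ring

lemma sum_condIndepPush_le (hp : ∀ s, 0 ≤ p s) (f : S → T) (g : S → V) (h : S → W) :
    ∑ t, condIndepPush p f g h t ≤ ∑ s, p s := by
  calc ∑ t, condIndepPush p f g h t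
      = ∑ w, (∑ t, push p (fun s => (f s, h s)) (t, w))
          * (∑ v, push p (fun s => (g s, h s)) (v, w)) / push p h w := by
        rw [Fintype.sum_prod_type, Finset.sum_comm]
        refine Finset.sum_congr rfl fun w _ => ?_
        rw [Fintype.sum_prod_type, Finset.sum_mul_sum, Finset.sum_div]
        simp only [condIndepPush, Finset.sum_div]
    _ ≤ ∑ w, push p h w := by
        refine Finset.sum_le_sum fun w _ => ?_
        rw [sum_push_pair_fst, sum_push_pair_fst]
        rcases (push_nonneg hp h w).eq_or_lt with h0 | h0
        · simp [← h0]
        · rw [mul_div_cancel_right₀ _ h0.ne']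
    _ = ∑ s, p s := sum_push h

lemma push_eq_condIndepPush_of_cmiOf_eq_zero (hp : ∀ s, 0 ≤ p s) {f : S → T} {g : S → V}
    {h : S → W} (hcmi : cmiOf p f g h = 0) :
    push p (fun s => ((f s, g s), h s)) = condIndepPush p f g h := by
  refine eq_of_kl_eq_zero (push_nonneg hp _) (fun t => ?_) (fun t ht => ?_) ?_
    (cmiOf_eq_kl hp f g h ▸ hcmi)
  · exact div_nonneg (mul_nonneg (push_nonneg hp _ _) (push_nonneg hp _ _)) (push_nonneg hp _ _)
  · obtain ⟨hfh, hgh, hh⟩ := marginals_pos_of_push_pos hp f g h ht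
    exact div_pos (mul_pos hfh hgh) hh
  · rw [sum_push]
    exact sum_condIndepPush_le hp f g h

end ConditionalIndependence

theorem stmt11_general {U : Type*} [Fintype U]
    (p : U × Bool × Bool → ℝ) (hp : ∀ s, 0 ≤ p s)
    (hfull : ∀ x y, 0 < push p (fun s => s.2) (x, y))
    (hmarkov : cmiOf p (fun s => s.1) (fun s => s.2.2) (fun s => s.2.1) = 0)
    (hz : condEnt p (fun s => s.2.1 && s.2.2) (fun s => (s.1, s.2.2)) = 0) :
    condEnt p (fun s => s.2.1) (fun s => s.1) = 0 := by
  have hinj : Function.Injective fun s : U × Bool × Bool => ((s.1, s.2.2), s.2.1) := by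
    rintro ⟨_, _, _⟩ ⟨_, _, _⟩ h
    simp_all
  have hfactor := push_eq_condIndepPush_of_cmiOf_eq_zero hp hmarkov
  have hpos_true : ∀ s : U × Bool × Bool, 0 < p s → 0 < p (s.1, s.2.1, true) := by
    rintro ⟨u, x, y⟩ hs
    obtain ⟨hux, -, hx⟩ := marginals_pos_of_push_pos hp _ _ _ (t := ((u, y), x))
      ((push_apply_of_injective (p := p) hinj (u, x, y)).symm ▸ hs)
    have hyx : 0 < push p (fun s => (s.2.2, s.2.1)) (true, x) :=
      (hfull x true).trans_le (push_le_push_of_comp_eq hp Prod.swap (fun _ => rfl) (x, true))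
    rw [← push_apply_of_injective (p := p) hinj, hfactor]
    exact div_pos (mul_pos hux hyx) hx
  rw [condEnt_eq_zero_iff_determinedOnSupport hp] at hz ⊢
  intro s s' hs hs' hu
  simpa using hz _ _ (hpos_true s hs) (hpos_true s' hs') (by simp [hu])

theorem stmt11 {U : Type*} [Fintype U]
    (p : U × Bool × Bool → ℝ) (hp : ∀ s, 0 ≤ p s) (hp1 : ∑ s, p s = 1)
    (hfull : ∀ x y, 0 < push p (fun s => s.2) (x, y))
    (hmarkov : cmiOf p (fun s => s.1) (fun s => s.2.2) (fun s => s.2.1) = 0)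
    (hz : condEnt p (fun s => s.2.1 && s.2.2) (fun s => (s.1, s.2.2)) = 0) :
    condEnt p (fun s => s.2.1) (fun s => s.1) = 0 :=
  stmt11_general p hp hfull hmarkov hz
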